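/- arXiv:1707.08393 — 4 statements merged into one kernel-verified Lean document; each statement's English description precedes it below -/
import Mathlib

section
/- Every irrational x ∈ (0,1) has an N-continued fraction expansion: the convergents p_n(x)/q_n(x) converge to x as n → ∞, i.e. x = N/(a_1(x) + N/(a_2(x) + N/(a_3(x) + ⋯))). -/
/-!
With `t k = T_N^k x`, the relation `t k * (a_{k+1} + t (k+1)) = N` shows by induction that
`x = (p_n + t_n p_{n-1}) / (q_n + t_n q_{n-1})`, a weighted mediant of two consecutive
convergents. Together with the determinant identity `p_{n-1} q_n - p_n q_{n-1} = (-N)^n` this gives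
`|p_n/q_n - x| ≤ N^n / q_n^2`. Since every digit is at least `N`, `q_{n+1} ≥ 2N q_{n-1}`, so
`q_{n-1} q_n ≥ (2N)^{n-1}` and the error is at most `N / 2^(n-1)`.
-/

open MeasureTheory Set Filter
open scoped Classical Topology ENNReal

/-- The N-continued fraction transformation `T_N x = N/x - ⌊N/x⌋` (with `T_N 0 = 0`). -/
noncomputable def TN (N : ℕ) (x : ℝ) : ℝ := (N : ℝ) / x - ⌊(N : ℝ) / x⌋

/-- `digit N x k` is the (k+1)-st N-continued fraction digit `a_{k+1}(x) = ⌊N / T_N^k(x)⌋`. -/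
noncomputable def digit (N : ℕ) (x : ℝ) (k : ℕ) : ℕ := ⌊(N : ℝ) / (TN N)^[k] x⌋₊

/-- Numerators: `pA N a (m+1) = p_m`, where `p_{-1}=1`, `p_0=0`, `p_k = a_k p_{k-1} + N p_{k-2}`
and `a k` denotes the digit `a_{k+1}`. -/
noncomputable def pA (N : ℕ) (a : ℕ → ℕ) : ℕ → ℝ
  | 0 => 1
  | 1 => 0
  | (k+2) => (a k : ℝ) * pA N a (k+1) + (N : ℝ) * pA N a k

/-- Denominators: `qA N a (m+1) = q_m`, where `q_{-1}=0`, `q_0=1`, `q_k = a_k q_{k-1} + N q_{k-2}`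
and `a k` denotes the digit `a_{k+1}`. -/
noncomputable def qA (N : ℕ) (a : ℕ → ℕ) : ℕ → ℝ
  | 0 => 0
  | 1 => 1
  | (k+2) => (a k : ℝ) * qA N a (k+1) + (N : ℝ) * qA N a k

lemma abs_div_sub_le_of_mul_add_eq {p q p' q' t x : ℝ} (hq : 0 < q) (hq' : 0 ≤ q')
    (ht₀ : 0 ≤ t) (ht₁ : t ≤ 1) (hx : x * (q + t * q') = p + t * p') :
    |p / q - x| ≤ |p * q' - p' * q| / q ^ 2 := by
  have hden : 0 < q + t * q' := by positivity
  have hdiff : p / q - x = t * (p * q' - p' * q) / (q * (q + t * q')) := by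
    rw [← eq_div_iff hden.ne'] at hx
    rw [hx, div_sub_div _ _ hq.ne' hden.ne']
    ring
  rw [hdiff, abs_div, abs_mul, abs_of_nonneg ht₀, abs_of_pos (mul_pos hq hden)]
  apply div_le_div₀ (abs_nonneg _) (mul_le_of_le_one_left (abs_nonneg _) ht₁) (by positivity)
  nlinarith [mul_nonneg ht₀ hq']

section Convergents

variable {N : ℕ} {a : ℕ → ℕ}

lemma pA_add_two (n : ℕ) : pA N a (n + 2) = a n * pA N a (n + 1) + N * pA N a n := rfl

lemma qA_add_two (n : ℕ) : qA N a (n + 2) = a n * qA N a (n + 1) + N * qA N a n := rfl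

lemma pA_mul_qA_succ_sub (n : ℕ) :
    pA N a n * qA N a (n + 1) - pA N a (n + 1) * qA N a n = (-(N : ℝ)) ^ n := by
  induction n with
  | zero => simp [pA, qA]
  | succ n ih =>
    rw [pA_add_two, qA_add_two, pow_succ]
    linear_combination (-(N : ℝ)) * ih

lemma qA_nonneg : ∀ n, 0 ≤ qA N a n
  | 0 => le_rfl
  | 1 => zero_le_one
  | n + 2 => by
    rw [qA_add_two]
    exact add_nonneg (mul_nonneg (Nat.cast_nonneg _) (qA_nonneg _))
      (mul_nonneg (Nat.cast_nonneg _) (qA_nonneg _))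

lemma qA_monotone (ha : ∀ k, 1 ≤ a k) : Monotone (qA N a) := by
  refine monotone_nat_of_le_succ fun n => ?_
  cases n with
  | zero => exact zero_le_one
  | succ n =>
    have ha' : (1 : ℝ) ≤ a n := by exact_mod_cast ha n
    rw [qA_add_two]
    nlinarith [qA_nonneg (N := N) (a := a) n, qA_nonneg (N := N) (a := a) (n + 1)]

lemma one_le_qA_succ (ha : ∀ k, 1 ≤ a k) (n : ℕ) : 1 ≤ qA N a (n + 1) :=
  qA_monotone ha (Nat.le_add_left 1 n)

lemma two_mul_mul_qA_le_qA_add_two (hN : 1 ≤ N) (ha : ∀ k, N ≤ a k) (n : ℕ) :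
    2 * N * qA N a n ≤ qA N a (n + 2) := by
  have ha' : (N : ℝ) ≤ a n := by exact_mod_cast ha n
  have hmono : qA N a n ≤ qA N a (n + 1) :=
    qA_monotone (fun k => hN.trans (ha k)) (Nat.le_succ n)
  rw [qA_add_two]
  nlinarith [qA_nonneg (N := N) (a := a) n]

lemma two_mul_pow_le_qA_mul_qA (hN : 1 ≤ N) (ha : ∀ k, N ≤ a k) (n : ℕ) :
    (2 * (N : ℝ)) ^ n ≤ qA N a (n + 1) * qA N a (n + 2) := by
  induction n with
  | zero =>
    have ha₀ : (1 : ℝ) ≤ a 0 := by exact_mod_cast hN.trans (ha 0)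
    simpa [qA] using ha₀
  | succ n ih =>
    calc (2 * (N : ℝ)) ^ (n + 1) = 2 * N * (2 * N) ^ n := pow_succ' _ _
      _ ≤ 2 * N * (qA N a (n + 1) * qA N a (n + 2)) := by gcongr
      _ = qA N a (n + 2) * (2 * N * qA N a (n + 1)) := by ring
      _ ≤ qA N a (n + 2) * qA N a (n + 3) := by
        gcongr
        · exact qA_nonneg _
        · exact two_mul_mul_qA_le_qA_add_two hN ha (n + 1)

lemma mul_qA_add_eq {x : ℝ} {t : ℕ → ℝ} (ht₀ : t 0 = x)
    (hrec : ∀ k, t k * (a k + t (k + 1)) = N) (n : ℕ) :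
    x * (qA N a (n + 1) + t n * qA N a n) = pA N a (n + 1) + t n * pA N a n := by
  induction n with
  | zero => simp [pA, qA, ht₀]
  | succ n ih =>
    rw [pA_add_two, qA_add_two]
    linear_combination (a n + t (n + 1)) * ih + (pA N a n - x * qA N a n) * hrec n

lemma abs_pA_div_qA_sub_le {x : ℝ} {t : ℕ → ℝ} (ha : ∀ k, 1 ≤ a k) (ht₀ : t 0 = x)
    (ht : ∀ k, t k ∈ Icc 0 1) (hrec : ∀ k, t k * (a k + t (k + 1)) = N) (n : ℕ) :
    |pA N a (n + 1) / qA N a (n + 1) - x| ≤ (N : ℝ) ^ n / qA N a (n + 1) ^ 2 := by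
  have h := abs_div_sub_le_of_mul_add_eq (zero_lt_one.trans_le (one_le_qA_succ ha n))
    (qA_nonneg n) (ht n).1 (ht n).2 (mul_qA_add_eq ht₀ hrec n)
  rwa [abs_sub_comm (pA N a (n + 1) * _), pA_mul_qA_succ_sub, abs_pow, abs_neg, Nat.abs_cast] at h

theorem tendsto_pA_div_qA {x : ℝ} {t : ℕ → ℝ} (hN : 1 ≤ N) (ha : ∀ k, N ≤ a k)
    (ht₀ : t 0 = x) (ht : ∀ k, t k ∈ Icc 0 1) (hrec : ∀ k, t k * (a k + t (k + 1)) = N) :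
    Tendsto (fun n => pA N a (n + 1) / qA N a (n + 1)) atTop (𝓝 x) := by
  have ha₁ : ∀ k, 1 ≤ a k := fun k => hN.trans (ha k)
  have herr (n : ℕ) : |pA N a (n + 2) / qA N a (n + 2) - x| ≤ N * (1 / 2) ^ n := by
    have hQ := one_le_qA_succ (N := N) ha₁ n
    have hmono : qA N a (n + 1) ≤ qA N a (n + 2) := qA_monotone ha₁ (Nat.le_succ _)
    calc |pA N a (n + 2) / qA N a (n + 2) - x|
        ≤ (N : ℝ) ^ (n + 1) / qA N a (n + 2) ^ 2 := abs_pA_div_qA_sub_le ha₁ ht₀ ht hrec _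
      _ ≤ (N : ℝ) ^ (n + 1) / (2 * N) ^ n := by
        gcongr
        calc (2 * (N : ℝ)) ^ n ≤ qA N a (n + 1) * qA N a (n + 2) :=
              two_mul_pow_le_qA_mul_qA hN ha n
          _ ≤ qA N a (n + 2) ^ 2 := by nlinarith
      _ = N * (1 / 2) ^ n := by rw [pow_succ', mul_pow, one_div_pow]; field_simp
  rw [← tendsto_add_atTop_iff_nat 1]
  refine tendsto_sub_nhds_zero_iff.mp (squeeze_zero_norm herr ?_)
  simpa using (tendsto_pow_atTop_nhds_zero_of_lt_one (by norm_num : (0 : ℝ) ≤ 1 / 2)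
    (by norm_num)).const_mul (N : ℝ)

end Convergents

lemma natFloor_add_TN (N : ℕ) {y : ℝ} (hy : 0 < y) : (⌊(N : ℝ) / y⌋₊ : ℝ) + TN N y = N / y := by
  rw [TN, natCast_floor_eq_intCast_floor (by positivity)]
  ring

lemma TN_mapsTo {N : ℕ} (hN : 1 ≤ N) :
    MapsTo (TN N) {y | y ∈ Ioo 0 1 ∧ Irrational y} {y | y ∈ Ioo 0 1 ∧ Irrational y} := by
  rintro y ⟨-, hy⟩
  have hirr : Irrational (TN N y) := (hy.natCast_div (by omega)).sub_intCast _
  exact ⟨⟨(Int.fract_nonneg _).lt_of_ne' hirr.ne_zero, Int.fract_lt_one _⟩, hirr⟩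

/-- Every irrational `x ∈ (0,1)` has an N-continued fraction expansion:
the convergents `p_n(x)/q_n(x)` converge to `x`. -/
theorem convergents_tendsto (N : ℕ) (hN : 1 ≤ N) (x : ℝ) (hx : x ∈ Ioo (0:ℝ) 1)
    (hxi : Irrational x) :
    Tendsto (fun n : ℕ => pA N (digit N x) (n+1) / qA N (digit N x) (n+1)) atTop (𝓝 x) := by
  set t : ℕ → ℝ := fun k => (TN N)^[k] x
  have horbit (k : ℕ) : t k ∈ Ioo 0 1 := ((TN_mapsTo hN).iterate k ⟨hx, hxi⟩).1
  have hrec (k : ℕ) : t k * (digit N x k + t (k + 1)) = N := by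
    simp only [t, digit, Function.iterate_succ_apply', natFloor_add_TN N (horbit k).1]
    exact mul_div_cancel₀ _ (horbit k).1.ne'
  have hdigit (k : ℕ) : N ≤ digit N x k := by
    refine Nat.le_floor ((le_div_iff₀ (horbit k).1).2 ?_)
    nlinarith [(horbit k).2, (horbit k).1]
  exact tendsto_pA_div_qA hN hdigit rfl (fun k => Ioo_subset_Icc_self (horbit k)) hrec
end

section
/- (Brodén–Borel–Lévy formula for N-continued fractions.) For every n ≥ 1, all integers i_1,…,i_n ≥ N, and every x ∈ I, one has λ({x' ∈ I_N(i_1,…,i_n) : T_N^n(x') < x}) = λ(I_N(i_1,…,i_n)) · (s_n + N)x/(s_n x + N), where s_n = [i_n, i_{n−1}, …, i_1]_N = N·q_{n−1}/q_n, the p's and q's being computed from the digits i_1,…,i_n. -/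
/-!
On `I_N(i_1,…,i_n)` the map `T_N^n` is inverted by the branch
`ψ(t) = [i_1, …, i_{n-1}, i_n + t]_N = (p_{n-1} t + p_n)/(q_{n-1} t + q_n)`, which carries the
irrationals of `(0, x)` onto `{x' ∈ I_N(i_1,…,i_n) : T_N^n x' < x}`. As a monotone Möbius map,
`ψ` sends `(0, x)` onto an interval of length `|ψ x - ψ 0|`, and discarding the countably many
rationals does not change the measure. Finally
`ψ x - ψ 0 = x (p_{n-1} q_n - p_n q_{n-1}) / (q_n (q_{n-1} x + q_n))`, so dividing by the value
at `x = 1` leaves `(q_{n-1} + q_n) x / (q_{n-1} x + q_n)`, which is the stated factor because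
`s_n = N q_{n-1} / q_n`.
-/

open MeasureTheory Set Filter
open scoped Classical Topology ENNReal

/-- Value of the finite N-continued fraction `[ℓ 0, …, ℓ (d-1)]_N = N/(ℓ 0 + N/(ℓ 1 + ⋯ + N/ℓ (d-1)))`. -/
noncomputable def cfVal (N : ℕ) : (ℕ → ℕ) → ℕ → ℝ
  | _, 0 => 0
  | ℓ, (d+1) => (N : ℝ) / ((ℓ 0 : ℝ) + cfVal N (fun k => ℓ (k+1)) d)

/-- The fundamental interval `I_N(i 0, …, i (n-1))` of rank `n`:
irrational `x ∈ (0,1)` whose first `n` digits are `i 0, …, i (n-1)`. -/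
def fund (N n : ℕ) (i : ℕ → ℕ) : Set ℝ :=
  {x ∈ Ioo (0:ℝ) 1 | Irrational x ∧ ∀ k < n, digit N x k = i k}

section Mobius

variable {a b c d : ℝ}

noncomputable def mobius (a b c d t : ℝ) : ℝ := (a * t + b) / (c * t + d)

lemma mobius_sub_mobius (hc : 0 ≤ c) (hd : 0 < d) {s t : ℝ} (hs : 0 ≤ s) (ht : 0 ≤ t) :
    mobius a b c d t - mobius a b c d s =
      (t - s) * (a * d - b * c) / ((c * t + d) * (c * s + d)) := by
  have hct : 0 < c * t + d := by positivity
  have hcs : 0 < c * s + d := by positivity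
  rw [mobius, mobius]
  field_simp
  ring

lemma continuousOn_mobius (hc : 0 ≤ c) (hd : 0 < d) : ContinuousOn (mobius a b c d) (Ici 0) :=
  ContinuousOn.div (by fun_prop) (by fun_prop) fun t (ht : 0 ≤ t) => by positivity

lemma monotoneOn_mobius_or_antitoneOn (hc : 0 ≤ c) (hd : 0 < d) :
    MonotoneOn (mobius a b c d) (Ici 0) ∨ AntitoneOn (mobius a b c d) (Ici 0) := by
  have hquot : ∀ s ∈ Ici (0 : ℝ), ∀ t ∈ Ici (0 : ℝ), s ≤ t →
      0 ≤ (t - s) / ((c * t + d) * (c * s + d)) :=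
    fun s (hs : 0 ≤ s) t (ht : 0 ≤ t) hst => div_nonneg (sub_nonneg.2 hst) (by positivity)
  rcases le_total 0 (a * d - b * c) with hdet | hdet
  · refine .inl fun s hs t ht hst => sub_nonneg.1 ?_
    rw [mobius_sub_mobius hc hd hs ht, mul_div_right_comm]
    exact mul_nonneg (hquot s hs t ht hst) hdet
  · refine .inr fun s hs t ht hst => sub_nonpos.1 ?_
    rw [mobius_sub_mobius hc hd hs ht, mul_div_right_comm]
    exact mul_nonpos_of_nonneg_of_nonpos (hquot s hs t ht hst) hdet

lemma abs_mobius_sub_mobius_zero (hc : 0 ≤ c) (hd : 0 < d) {x : ℝ} (hx : 0 ≤ x) :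
    |mobius a b c d x - mobius a b c d 0| =
      |mobius a b c d 1 - mobius a b c d 0| * ((c + d) * x / (c * x + d)) := by
  have hcx : 0 < c * x + d := by positivity
  rw [mobius_sub_mobius hc hd le_rfl hx, mobius_sub_mobius hc hd le_rfl zero_le_one]
  simp only [sub_zero, mul_zero, zero_add, mul_one, one_mul]
  rw [abs_div, abs_div, abs_mul, abs_of_nonneg hx, abs_of_pos (mul_pos hcx hd),
    abs_of_pos (by positivity : 0 < (c + d) * d)]
  field_simp

end Mobius

lemma volume_eq_of_Ioo_subset_of_subset_Icc {u v : ℝ} {s : Set ℝ} (hIoo : Ioo u v ⊆ s)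
    (hIcc : s ⊆ Icc u v) : volume s = ENNReal.ofReal (v - u) :=
  le_antisymm ((measure_mono hIcc).trans_eq Real.volume_Icc)
    (Real.volume_Ioo.symm.trans_le (measure_mono hIoo))

lemma volume_image_Ioo_sdiff_countable {f : ℝ → ℝ} {a b : ℝ} (hab : a ≤ b)
    (hf : ContinuousOn f (Icc a b)) (hmono : MonotoneOn f (Icc a b) ∨ AntitoneOn f (Icc a b))
    {C : Set ℝ} (hC : C.Countable) :
    volume (f '' (Ioo a b \ C)) = ENNReal.ofReal |f b - f a| := by
  have hnull : volume (f '' (Ioo a b \ C)) = volume (f '' Ioo a b) := by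
    refine le_antisymm (measure_mono (image_mono sdiff_subset)) ?_
    rw [← measure_sdiff_null ((hC.image f).measure_zero volume)]
    refine measure_mono ?_
    rintro _ ⟨⟨t, ht, rfl⟩, hfC⟩
    exact ⟨t, ⟨ht, fun htC => hfC ⟨t, htC, rfl⟩⟩, rfl⟩
  have ha : a ∈ Icc a b := left_mem_Icc.2 hab
  have hb : b ∈ Icc a b := right_mem_Icc.2 hab
  rw [hnull]
  rcases hmono with hmono | hanti
  · rw [abs_of_nonneg (sub_nonneg.2 (hmono ha hb hab))]
    refine volume_eq_of_Ioo_subset_of_subset_Icc (intermediate_value_Ioo hab hf) ?_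
    rintro _ ⟨t, ht, rfl⟩
    exact ⟨hmono ha (Ioo_subset_Icc_self ht) ht.1.le, hmono (Ioo_subset_Icc_self ht) hb ht.2.le⟩
  · rw [abs_sub_comm, abs_of_nonneg (sub_nonneg.2 (hanti ha hb hab))]
    refine volume_eq_of_Ioo_subset_of_subset_Icc (intermediate_value_Ioo' hab hf) ?_
    rintro _ ⟨t, ht, rfl⟩
    exact ⟨hanti (Ioo_subset_Icc_self ht) hb ht.2.le, hanti ha (Ioo_subset_Icc_self ht) ht.1.le⟩

section NContinuedFraction

variable {N : ℕ}

lemma TN_eq_fract (N : ℕ) (x : ℝ) : TN N x = Int.fract (N / x) := rfl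

lemma digit_zero (N : ℕ) (x : ℝ) : digit N x 0 = ⌊(N : ℝ) / x⌋₊ := rfl

lemma digit_succ (N : ℕ) (x : ℝ) (k : ℕ) : digit N x (k + 1) = digit N (TN N x) k := by
  simp only [digit, Function.iterate_succ_apply]

lemma TN_mem_Ioo_and_irrational (hN : N ≠ 0) {y : ℝ} (hirr : Irrational y) :
    TN N y ∈ Ioo 0 1 ∧ Irrational (TN N y) := by
  have hfract : Irrational (TN N y) := (hirr.natCast_div hN).sub_intCast _
  exact ⟨⟨(Int.fract_nonneg _).lt_of_ne' hfract.ne_zero, Int.fract_lt_one _⟩, hfract⟩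

lemma eq_div_digit_add_TN (hN : N ≠ 0) {y : ℝ} (hy : 0 < y) :
    y = N / (digit N y 0 + TN N y) := by
  have hNy : (0 : ℝ) ≤ N / y := by positivity
  rw [digit_zero, TN_eq_fract, natCast_floor_eq_intCast_floor hNy, Int.floor_add_fract,
    div_div_cancel₀ (by exact_mod_cast hN)]

lemma TN_div_natCast_add (hN : N ≠ 0) (a : ℕ) {t : ℝ} (ht : t ∈ Ioo 0 1) :
    TN N (N / (a + t)) = t ∧ digit N (N / (a + t)) 0 = a := by
  have hN' : (N : ℝ) ≠ 0 := by exact_mod_cast hN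
  have hat : (0 : ℝ) < a + t := by linarith [ht.1, (Nat.cast_nonneg a : (0 : ℝ) ≤ a)]
  rw [TN_eq_fract, digit_zero, div_div_cancel₀ hN']
  constructor
  · rw [add_comm, Int.fract_add_natCast, Int.fract_eq_self.2 ⟨ht.1.le, ht.2⟩]
  · exact (Nat.floor_eq_iff hat.le).2 ⟨by linarith [ht.1], by linarith [ht.2]⟩

lemma div_natCast_add_mem_Ioo_and_irrational (hN : N ≠ 0) {a : ℕ} (ha : N ≤ a) {t : ℝ}
    (ht : t ∈ Ioo 0 1) (hirr : Irrational t) :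
    (N / (a + t) : ℝ) ∈ Ioo 0 1 ∧ Irrational (N / (a + t)) := by
  have hN' : (0 : ℝ) < N := by exact_mod_cast Nat.pos_of_ne_zero hN
  have ha' : (N : ℝ) ≤ a := by exact_mod_cast ha
  have hat : (N : ℝ) < a + t := by linarith [ht.1]
  exact ⟨⟨div_pos hN' (hN'.trans hat), (div_lt_one (hN'.trans hat)).2 hat⟩,
    (hirr.natCast_add a).natCast_div hN⟩

/-- The inverse branch `t ↦ N/(ℓ 0 + N/(ℓ 1 + ⋯ + N/(ℓ (d-1) + t)))` of `T_N^d` on `I_N(ℓ)`. -/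
noncomputable def cfValTail (N : ℕ) : (ℕ → ℕ) → ℕ → ℝ → ℝ
  | _, 0, t => t
  | ℓ, d + 1, t => N / (ℓ 0 + cfValTail N (fun k => ℓ (k + 1)) d t)

lemma cfValTail_mem_fund (hN : N ≠ 0) {n : ℕ} {i : ℕ → ℕ} (hi : ∀ k < n, N ≤ i k) {t : ℝ}
    (ht : t ∈ Ioo 0 1) (hirr : Irrational t) :
    cfValTail N i n t ∈ fund N n i ∧ (TN N)^[n] (cfValTail N i n t) = t := by
  induction n generalizing i with
  | zero => exact ⟨⟨ht, hirr, by simp⟩, rfl⟩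
  | succ n ih =>
    obtain ⟨⟨hu, hu_irr, hu_digit⟩, hu_iter⟩ :=
      ih (i := fun k => i (k + 1)) fun k hk => hi _ (by omega)
    obtain ⟨hTN, hdigit⟩ := TN_div_natCast_add hN (i 0) hu
    obtain ⟨hy, hy_irr⟩ := div_natCast_add_mem_Ioo_and_irrational hN (hi 0 (by omega)) hu hu_irr
    rw [cfValTail]
    refine ⟨⟨hy, hy_irr, ?_⟩, ?_⟩
    · rintro (_ | k) hk
      · exact hdigit
      · rw [digit_succ, hTN]
        exact hu_digit k (by omega)
    · rw [Function.iterate_succ_apply, hTN, hu_iter]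

lemma TN_mem_fund (hN : N ≠ 0) {n : ℕ} {i : ℕ → ℕ} {y : ℝ} (hy : y ∈ fund N (n + 1) i) :
    TN N y ∈ fund N n (fun k => i (k + 1)) := by
  obtain ⟨-, hirr, hdigit⟩ := hy
  obtain ⟨hT, hT_irr⟩ := TN_mem_Ioo_and_irrational hN hirr
  exact ⟨hT, hT_irr, fun k hk => by rw [← digit_succ]; exact hdigit _ (by omega)⟩

lemma cfValTail_iterate_TN (hN : N ≠ 0) {n : ℕ} {i : ℕ → ℕ} {y : ℝ} (hy : y ∈ fund N n i) :
    (TN N)^[n] y ∈ Ioo 0 1 ∧ Irrational ((TN N)^[n] y) ∧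
      cfValTail N i n ((TN N)^[n] y) = y := by
  induction n generalizing i y with
  | zero => exact ⟨hy.1, hy.2.1, rfl⟩
  | succ n ih =>
    obtain ⟨hT, hT_irr, hT_eq⟩ := ih (TN_mem_fund hN hy)
    rw [Function.iterate_succ_apply, cfValTail, hT_eq, ← hy.2.2 0 (by omega)]
    exact ⟨hT, hT_irr, (eq_div_digit_add_TN hN hy.1.1).symm⟩

lemma setOf_mem_fund_iterate_lt_eq_image (hN : N ≠ 0) {n : ℕ} {i : ℕ → ℕ}
    (hi : ∀ k < n, N ≤ i k) {x : ℝ} (hx : x ≤ 1) :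
    {y ∈ fund N n i | (TN N)^[n] y < x} =
      cfValTail N i n '' {t ∈ Ioo 0 x | Irrational t} := by
  ext y
  constructor
  · rintro ⟨hy, hlt⟩
    obtain ⟨hT, hT_irr, hT_eq⟩ := cfValTail_iterate_TN hN hy
    exact ⟨_, ⟨⟨hT.1, hlt⟩, hT_irr⟩, hT_eq⟩
  · rintro ⟨t, ⟨ht, hirr⟩, rfl⟩
    obtain ⟨hmem, hiter⟩ := cfValTail_mem_fund hN hi ⟨ht.1, ht.2.trans_le hx⟩ hirr
    exact ⟨hmem, by rw [hiter]; exact ht.2⟩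

lemma fund_eq_setOf_iterate_lt_one (hN : N ≠ 0) (n : ℕ) (i : ℕ → ℕ) :
    fund N n i = {y ∈ fund N n i | (TN N)^[n] y < 1} :=
  (sep_eq_self_iff_mem_true.2 fun _ hy => (cfValTail_iterate_TN hN hy).1.2).symm

lemma cfValTail_succ_right (N : ℕ) (ℓ : ℕ → ℕ) (d : ℕ) (t : ℝ) :
    cfValTail N ℓ (d + 1) t = cfValTail N ℓ d (N / (ℓ d + t)) := by
  induction d generalizing ℓ with
  | zero => rfl
  | succ d ih => rw [cfValTail, ih, cfValTail]

/-- `convNum N i m = p_{m-1}` and `convDen N i m = q_{m-1}`: the index is shifted by one so that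
`p_{-1}, q_{-1}` sit at `m = 0`, and the digit `i k` plays the role of `i_{k+1}`. -/
def convNum (N : ℕ) (i : ℕ → ℕ) : ℕ → ℕ
  | 0 => 1
  | 1 => 0
  | m + 2 => i m * convNum N i (m + 1) + N * convNum N i m

def convDen (N : ℕ) (i : ℕ → ℕ) : ℕ → ℕ
  | 0 => 0
  | 1 => 1
  | m + 2 => i m * convDen N i (m + 1) + N * convDen N i m

lemma one_le_convDen {n : ℕ} {i : ℕ → ℕ} (hi : ∀ k < n, 1 ≤ i k) :
    1 ≤ convDen N i (n + 1) := by
  induction n with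
  | zero => rfl
  | succ n ih =>
    rw [convDen]
    nlinarith [ih fun k hk => hi k (by omega), hi n (by omega)]

lemma cfValTail_eq_mobius {n : ℕ} {i : ℕ → ℕ} (hi : ∀ k < n, 1 ≤ i k) {t : ℝ} (ht : 0 ≤ t) :
    cfValTail N i n t =
      mobius (convNum N i n) (convNum N i (n + 1)) (convDen N i n) (convDen N i (n + 1)) t := by
  induction n generalizing t with
  | zero => simp [cfValTail, mobius, convNum, convDen]
  | succ n ih =>
    have hin : (1 : ℝ) ≤ i n := by exact_mod_cast hi n (by omega)
    have hint : (0 : ℝ) < i n + t := by linarith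
    have hs : (0 : ℝ) ≤ N / (i n + t) := by positivity
    rw [cfValTail_succ_right, ih (fun k hk => hi k (by omega)) hs, mobius, mobius, convNum,
      convDen]
    push_cast
    field_simp
    ring

lemma cfVal_reverse_eq {n : ℕ} {i : ℕ → ℕ} (hi : ∀ k < n, 1 ≤ i k) :
    cfVal N (fun k => i (n - 1 - k)) n = N * convDen N i n / convDen N i (n + 1) := by
  induction n with
  | zero => simp [cfVal, convDen]
  | succ n ih =>
    have hq : (1 : ℝ) ≤ convDen N i (n + 1) := by
      exact_mod_cast one_le_convDen fun k hk => hi k (by omega)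
    have hrev : (fun k => i (n + 1 - 1 - (k + 1))) = fun k => i (n - 1 - k) := by
      funext k; congr 1; omega
    rw [cfVal, hrev, ih fun k hk => hi k (by omega), Nat.add_sub_cancel, Nat.sub_zero, convDen]
    push_cast
    field_simp

end NContinuedFraction

theorem broden_borel_levy_general (N : ℕ) (hN : 1 ≤ N) (n : ℕ)
    (i : ℕ → ℕ) (hi : ∀ k < n, N ≤ i k) (x : ℝ) (hx : x ∈ Icc (0:ℝ) 1) :
    (volume {x' ∈ fund N n i | (TN N)^[n] x' < x}).toReal =
      (volume (fund N n i)).toReal *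
        ((cfVal N (fun k => i (n - 1 - k)) n + N) * x
          / (cfVal N (fun k => i (n - 1 - k)) n * x + N)) := by
  have hN0 : N ≠ 0 := by omega
  have hi1 : ∀ k < n, 1 ≤ i k := fun k hk => hN.trans (hi k hk)
  set f := mobius (convNum N i n) (convNum N i (n + 1)) (convDen N i n) (convDen N i (n + 1))
  have hc : (0 : ℝ) ≤ convDen N i n := Nat.cast_nonneg _
  have hd : (0 : ℝ) < convDen N i (n + 1) := by exact_mod_cast one_le_convDen hi1
  have hvol : ∀ y ∈ Icc (0 : ℝ) 1,
      volume {x' ∈ fund N n i | (TN N)^[n] x' < y} = ENNReal.ofReal |f y - f 0| := by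
    intro y hy
    rw [setOf_mem_fund_iterate_lt_eq_image hN0 hi hy.2,
      image_congr fun t ht => cfValTail_eq_mobius hi1 ht.1.1.le]
    exact volume_image_Ioo_sdiff_countable hy.1
      ((continuousOn_mobius hc hd).mono Icc_subset_Ici_self)
      ((monotoneOn_mobius_or_antitoneOn hc hd).imp (·.mono Icc_subset_Ici_self)
        (·.mono Icc_subset_Ici_self)) (countable_range _)
  have hfund : volume (fund N n i) = ENNReal.ofReal |f 1 - f 0| := by
    rw [fund_eq_setOf_iterate_lt_one hN0]
    exact hvol 1 ⟨zero_le_one, le_rfl⟩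
  rw [hvol x hx, hfund, ENNReal.toReal_ofReal (abs_nonneg _),
    ENNReal.toReal_ofReal (abs_nonneg _), abs_mobius_sub_mobius_zero hc hd hx.1,
    cfVal_reverse_eq hi1]
  congr 1
  field_simp

/-- Brodén–Borel–Lévy formula: for `n ≥ 1`, digits `i_1,…,i_n ≥ N` and `x ∈ I`,
`λ({x' ∈ I_N(i_1,…,i_n) : T_N^n(x') < x}) = λ(I_N(i_1,…,i_n)) (s_n+N)x/(s_n x+N)`,
where `s_n = [i_n, i_{n-1}, …, i_1]_N`. -/
theorem broden_borel_levy (N : ℕ) (hN : 1 ≤ N) (n : ℕ) (hn : 1 ≤ n)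
    (i : ℕ → ℕ) (hi : ∀ k < n, N ≤ i k) (x : ℝ) (hx : x ∈ Icc (0:ℝ) 1) :
    (volume {x' ∈ fund N n i | (TN N)^[n] x' < x}).toReal =
      (volume (fund N n i)).toReal *
        ((cfVal N (fun k => i (n - 1 - k)) n + N) * x
          / (cfVal N (fun k => i (n - 1 - k)) n * x + N)) :=
  broden_borel_levy_general N hN n i hi x hx
end

section
/- The function x ↦ log((x+N)/N) is a fixed point of the Gauss–Kuzmin equation: for every x ∈ I, log((x+N)/N) = Σ_{i ≥ N} ( log((N/i + N)/N) − log((N/(x+i) + N)/N) ), the sum being over all integers i ≥ N. -/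
/-! With `g k = log (1 + x / (N + k))`, the `k`-th summand equals `g k - g (k + 1)`. Since `g`
decreases to `0`, the series telescopes to `g 0 = log ((x + N) / N)`. -/

open Set Filter Real
open scoped Topology

theorem hasSum_sub_succ_of_antitone {f : ℕ → ℝ} (hf : Antitone f)
    (hlim : Tendsto f atTop (𝓝 0)) : HasSum (fun k => f k - f (k + 1)) (f 0) := by
  refine (hasSum_iff_tendsto_nat_of_nonneg (fun k => sub_nonneg.2 (hf k.le_succ)) _).2 ?_
  simp_rw [Finset.sum_range_sub']
  simpa using tendsto_const_nhds.sub hlim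

theorem antitoneOn_log_one_add_div {x : ℝ} (hx : 0 ≤ x) :
    AntitoneOn (fun t : ℝ => log (1 + x / t)) (Ioi 0) := by
  intro s hs t _ hst
  have hxt : 0 ≤ x / t := div_nonneg hx (hs.out.trans_le hst).le
  exact log_le_log (by linarith) (by gcongr)

theorem tendsto_log_one_add_div_atTop (x : ℝ) :
    Tendsto (fun t : ℝ => log (1 + x / t)) atTop (𝓝 0) := by
  have h : Tendsto (fun t : ℝ => 1 + x / t) atTop (𝓝 1) := by
    simpa using tendsto_const_nhds.add ((tendsto_const_nhds (x := x)).div_atTop tendsto_id)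
  rw [← log_one]
  exact (continuousAt_log one_ne_zero).tendsto.comp h

theorem log_div_add_self_div_self {a y : ℝ} (ha : a ≠ 0) (hy : 0 < y) :
    log ((a / y + a) / a) = log (y + 1) - log y := by
  rw [← log_div (by positivity) hy.ne']
  congr 1
  field_simp
  ring

theorem log_one_add_div_self {x y : ℝ} (hx : 0 ≤ x) (hy : 0 < y) :
    log (1 + x / y) = log (x + y) - log y := by
  rw [← log_div (by positivity) hy.ne']
  congr 1
  field_simp
  ring

theorem log_gaussKuzmin_summand_eq {a x i : ℝ} (ha : a ≠ 0) (hx : 0 ≤ x) (hi : 0 < i) :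
    log ((a / i + a) / a) - log ((a / (x + i) + a) / a) =
      log (1 + x / i) - log (1 + x / (i + 1)) := by
  rw [log_div_add_self_div_self ha hi, log_div_add_self_div_self ha (by positivity),
    log_one_add_div_self hx hi, log_one_add_div_self hx (by positivity), ← add_assoc]
  ring

/-- The function `x ↦ log((x+N)/N)` is a fixed point of the Gauss–Kuzmin equation:
for every `x ∈ I`,
`log((x+N)/N) = Σ_{i ≥ N} (log((N/i+N)/N) − log((N/(x+i)+N)/N))`, the sum over integers
`i ≥ N` being indexed by `i = N + k`, `k : ℕ`. -/
theorem log_fixed_point (N : ℕ) (hN : 1 ≤ N) (x : ℝ) (hx : x ∈ Icc (0:ℝ) 1) :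
    Real.log ((x + N) / N) =
      ∑' k : ℕ, (Real.log (((N : ℝ) / ((N + k : ℕ) : ℝ) + N) / N)
                  - Real.log (((N : ℝ) / (x + ((N + k : ℕ) : ℝ)) + N) / N)) := by
  have hN0 : (0 : ℝ) < N := by exact_mod_cast hN
  have hpos : ∀ k : ℕ, (0 : ℝ) < ((N + k : ℕ) : ℝ) := fun k => by positivity
  set g : ℕ → ℝ := fun k => log (1 + x / ((N + k : ℕ) : ℝ))
  have hg_anti : Antitone g := fun j k hjk =>
    antitoneOn_log_one_add_div hx.1 (hpos j) (hpos k) (by gcongr)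
  have hg_lim : Tendsto g atTop (𝓝 0) :=
    (tendsto_log_one_add_div_atTop x).comp
      (tendsto_natCast_atTop_atTop.comp (tendsto_atTop_mono (Nat.le_add_left · N) tendsto_id))
  have hsummand : ∀ k : ℕ, log (((N : ℝ) / ((N + k : ℕ) : ℝ) + N) / N)
      - log (((N : ℝ) / (x + ((N + k : ℕ) : ℝ)) + N) / N) = g k - g (k + 1) := fun k => by
    rw [log_gaussKuzmin_summand_eq hN0.ne' hx.1 (hpos k)]
    simp only [g, ← add_assoc, Nat.cast_add_one]
  have hg0 : g 0 = log ((x + N) / N) := by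
    simp only [g, add_zero, log_one_add_div_self hx.1 hN0,
      log_div (add_pos_of_nonneg_of_pos hx.1 hN0).ne' hN0.ne']
  rw [tsum_congr hsummand, (hasSum_sub_succ_of_antitone hg_anti hg_lim).tsum_eq, hg0]
end

section
/- (Recursion for the two-dimensional distribution functions.) Let F_n(x,y) = λ̄({(x',y') ∈ I² : T̄_N^n(x',y') ∈ [0,x]×[0,y]}). Then for every n ≥ 0, every x ∈ I and every y with 0 < y ≤ 1, setting ℓ_1 = ⌊N/y⌋, one has F_{n+1}(x,y) = Σ_{i ≥ ℓ_1} ( F_n(N/i, 1) − F_n(N/(x+i), 1) ) − ( F_n(N/ℓ_1, N/y − ℓ_1) − F_n(N/(x+ℓ_1), N/y − ℓ_1) ), the sum being over all integers i ≥ ℓ_1. -/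
open MeasureTheory Set Filter
open scoped Classical Topology ENNReal

/-- The natural extension map `T̄_N(x,y) = (T_N(x), N/(a_1(x)+y))` on `I²`
(defined as `(0,y)` for rational `x`, a set of measure zero). -/
noncomputable def TNbar (N : ℕ) (p : ℝ × ℝ) : ℝ × ℝ :=
  if Irrational p.1 then (TN N p.1, (N : ℝ) / ((⌊(N:ℝ)/p.1⌋₊ : ℝ) + p.2)) else (0, p.2)

/-- The two-dimensional distribution functions `F_n(x,y) = λ̄({(x',y') ∈ I² : T̄_N^n(x',y') ∈ [0,x]×[0,y]})`. -/
noncomputable def Ftwo (N n : ℕ) (x y : ℝ) : ℝ :=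
  (volume {p ∈ Icc (0:ℝ) 1 ×ˢ Icc (0:ℝ) 1 | (TNbar N)^[n] p ∈ Icc (0:ℝ) x ×ˢ Icc (0:ℝ) y}).toReal

/-!
`F_{n+1}(x, y)` is the `μ_n`-measure of `T̄_N⁻¹([0,x] × [0,y])`, where `μ_n` is the law of `T̄_N^n`
under Lebesgue measure on `I²`. For irrational `w` with first digit `i = ⌊N/w⌋`, the point `(w, z)`
lies in this preimage iff `T_N w ≤ x` and `N/y ≤ i + z`, i.e. iff `w ∈ [N/(x+i), N/i)` for some
`i ≥ ℓ = ⌊N/y⌋`, where for `i = ℓ` one needs in addition `z ≥ N/y - ℓ`. So, up to horizontal and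
vertical lines, the preimage is a disjoint union of strips with one rectangle removed, and the
measures of these are differences of values of `F_n`. The lines are `μ_n`-null: `T_N^n` has
countable fibres, and on each fibre the second coordinate of `T̄_N^n` is injective.
-/

open Function

lemma countable_setOf_not_irrational : {x : ℝ | ¬Irrational x}.Countable := by
  simp only [Irrational, not_not, ofPred_mem_eq]
  exact countable_range _

lemma measurableSet_setOf_irrational : MeasurableSet {x : ℝ | Irrational x} :=
  countable_setOf_not_irrational.measurableSet.of_compl

lemma ae_irrational_fst : ∀ᵐ p : ℝ × ℝ, Irrational p.1 :=
  Measure.quasiMeasurePreserving_fst.ae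
    ((countable_setOf_not_irrational.ae_notMem volume).mono fun _ h => not_not.mp h)

section TN

variable {N : ℕ} {u : ℝ}

lemma measurable_TN (N : ℕ) : Measurable (TN N) := by
  unfold TN; fun_prop

lemma TN_eq_div_sub_natFloor (hu : 0 ≤ u) : TN N u = N / u - ⌊(N : ℝ) / u⌋₊ := by
  rw [TN, ← Int.natCast_floor_eq_floor (by positivity), Int.cast_natCast]

lemma natFloor_div_lt (hN : N ≠ 0) (hu : Irrational u) (hu0 : 0 ≤ u) :
    (⌊(N : ℝ) / u⌋₊ : ℝ) < N / u :=
  (Nat.floor_le (by positivity)).lt_of_ne ((hu.natCast_div hN).ne_nat _).symm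

lemma le_natFloor_div (hu : u ∈ Ioc 0 1) : N ≤ ⌊(N : ℝ) / u⌋₊ :=
  Nat.le_floor ((le_div_iff₀ hu.1).mpr (mul_le_of_le_one_right N.cast_nonneg hu.2))

lemma Irrational.TN (hN : N ≠ 0) (hu : Irrational u) : Irrational (TN N u) :=
  (hu.natCast_div hN).sub_intCast _

lemma TN_mem_Icc (hN : N ≠ 0) (hu : Irrational u) (hu0 : 0 ≤ u) : TN N u ∈ Icc 0 1 := by
  rw [TN_eq_div_sub_natFloor hu0]
  have := natFloor_div_lt hN hu hu0
  have := Nat.lt_floor_add_one ((N : ℝ) / u)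
  constructor <;> linarith

/-- `u ≠ 0` is recovered from `T_N u` and its digit as `u = N / (⌊N/u⌋ + T_N u)`. -/
lemma countable_preimage_TN (hN : N ≠ 0) {C : Set ℝ} (hC : C.Countable) :
    (TN N ⁻¹' C).Countable := by
  refine ((countable_singleton 0).union
    (hC.biUnion fun w _ => countable_range fun m : ℤ => (N : ℝ) / (m + w))).mono ?_
  intro u hu
  rcases eq_or_ne u 0 with rfl | hu0
  · exact Or.inl rfl
  refine Or.inr (mem_biUnion (x := TN N u) hu ⟨⌊(N : ℝ) / u⌋, ?_⟩)
  simp only [TN, add_sub_cancel]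
  field_simp

lemma countable_preimage_iterate_TN (hN : N ≠ 0) {C : Set ℝ} (hC : C.Countable) (n : ℕ) :
    ((TN N)^[n] ⁻¹' C).Countable := by
  induction n with
  | zero => exact hC
  | succ n ih =>
    rw [iterate_succ, preimage_comp]
    exact countable_preimage_TN hN ih

end TN

section TNbar

variable {N : ℕ} {u v : ℝ}

lemma measurable_TNbar (N : ℕ) : Measurable (TNbar N) :=
  Measurable.ite (measurableSet_setOf_irrational.preimage measurable_fst)
    (((measurable_TN N).comp measurable_fst).prodMk (by fun_prop)) (by fun_prop)

lemma TNbar_of_irrational (hu : Irrational u) :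
    TNbar N (u, v) = (TN N u, N / (⌊(N : ℝ) / u⌋₊ + v)) :=
  if_pos hu

def irrationalSquare : Set (ℝ × ℝ) := {p | Irrational p.1} ∩ Icc 0 1 ×ˢ Icc 0 1

lemma div_natFloor_add_mem_Icc (hu : u ∈ Ioc 0 1) (hv : v ∈ Icc 0 1) :
    (N : ℝ) / (⌊(N : ℝ) / u⌋₊ + v) ∈ Icc 0 1 := by
  have : (N : ℝ) ≤ ⌊(N : ℝ) / u⌋₊ := by exact_mod_cast le_natFloor_div hu
  exact ⟨div_nonneg N.cast_nonneg (by linarith [hv.1]),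
    div_le_one_of_le₀ (by linarith [hv.1]) (by linarith [hv.1])⟩

lemma Irrational.mem_Ioc_of_mem_Icc (hu : Irrational u) (hu1 : u ∈ Icc 0 1) : u ∈ Ioc 0 1 :=
  ⟨hu1.1.lt_of_ne (by simpa using (hu.ne_nat 0).symm), hu1.2⟩

lemma mapsTo_TNbar_irrationalSquare (hN : N ≠ 0) :
    MapsTo (TNbar N) irrationalSquare irrationalSquare := by
  rintro ⟨u, v⟩ ⟨hu, hu1, hv⟩
  rw [TNbar_of_irrational hu]
  exact ⟨hu.TN hN, TN_mem_Icc hN hu hu1.1,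
    div_natFloor_add_mem_Icc (hu.mem_Ioc_of_mem_Icc hu1) hv⟩

lemma fst_iterate_TNbar (hN : N ≠ 0) {p : ℝ × ℝ} (hp : p ∈ irrationalSquare) (n : ℕ) :
    ((TNbar N)^[n] p).1 = (TN N)^[n] p.1 := by
  induction n generalizing p with
  | zero => rfl
  | succ n ih =>
    obtain ⟨u, v⟩ := p
    rw [iterate_succ_apply, iterate_succ_apply,
      ih (mapsTo_TNbar_irrationalSquare hN hp), TNbar_of_irrational hp.1]

lemma injOn_snd_iterate_TNbar (hN : N ≠ 0) (n : ℕ) (hu : Irrational u) (hu1 : u ∈ Icc 0 1) :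
    InjOn (fun v => ((TNbar N)^[n] (u, v)).2) (Icc 0 1) := by
  induction n generalizing u with
  | zero => exact fun _ _ _ _ h => h
  | succ n ih =>
    have hu' := hu.mem_Ioc_of_mem_Icc hu1
    have hg : InjOn (fun v => (N : ℝ) / (⌊(N : ℝ) / u⌋₊ + v)) (Icc 0 1) := by
      intro v hv w hw h
      have : (0 : ℝ) < ⌊(N : ℝ) / u⌋₊ := by
        exact_mod_cast (Nat.pos_of_ne_zero hN).trans_le (le_natFloor_div hu')
      have := (div_eq_div_iff (by linarith [hv.1]) (by linarith [hw.1])).mp h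
      have := mul_left_cancel₀ (Nat.cast_ne_zero.mpr hN) this
      linarith
    have := (ih (hu.TN hN) (TN_mem_Icc hN hu hu1.1)).comp hg
      fun v hv => div_natFloor_add_mem_Icc hu' hv
    refine this.congr fun v _ => ?_
    simp only [comp_apply, iterate_succ_apply, TNbar_of_irrational hu]

end TNbar

namespace MeasureTheory

variable {α β ι : Type*} [MeasurableSpace α] [MeasurableSpace β]

lemma measureReal_iUnion [Countable ι] {μ : Measure α} [IsFiniteMeasure μ] {f : ι → Set α}
    (hd : Pairwise (Disjoint on f)) (hf : ∀ i, MeasurableSet (f i)) :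
    μ.real (⋃ i, f i) = ∑' i, μ.real (f i) := by
  simp only [measureReal_def, measure_iUnion hd hf,
    ENNReal.tsum_toReal_eq fun i => measure_ne_top μ (f i)]

lemma measureReal_Ioc_prod [LinearOrder α] [TopologicalSpace α] [OrderClosedTopology α]
    [OpensMeasurableSpace α] {μ : Measure (α × β)} [IsFiniteMeasure μ] {a b c : α}
    (hcb : c ≤ b) (hba : b ≤ a) {s : Set β} (hs : MeasurableSet s) :
    μ.real (Ioc b a ×ˢ s) = μ.real (Icc c a ×ˢ s) - μ.real (Icc c b ×ˢ s) := by
  rw [← Icc_union_Ioc_eq_Icc hcb hba, union_prod,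
    measureReal_union ((disjoint_left.mpr fun _ h h' => (not_lt.mpr h.2) h'.1).set_prod_left s s)
      (measurableSet_Ioc.prod hs)]
  ring

end MeasureTheory

section TNstrip

variable {N : ℕ} {x w : ℝ} {j : ℕ}

/-- For `0 ≤ x ≤ 1`, up to its endpoints, the set of `w` with first digit `j` and `T_N w < x`. -/
def TNstrip (N : ℕ) (x : ℝ) (j : ℕ) : Set ℝ := Ioc (N / (x + j)) (N / j)

lemma measurableSet_TNstrip : MeasurableSet (TNstrip N x j) := measurableSet_Ioc

lemma natFloor_div_eq_of_mem_TNstrip (hN : N ≠ 0) (hx : x ∈ Icc 0 1) (hw : w ∈ TNstrip N x j) :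
    ⌊(N : ℝ) / w⌋₊ = j ∧ N / w < x + j := by
  have hN : (0 : ℝ) < N := by positivity
  have hw0 : 0 < w := (div_nonneg hN.le (by linarith [hx.1] : (0 : ℝ) ≤ x + j)).trans_lt hw.1
  have hj : (0 : ℝ) < j := (div_pos_iff_of_pos_left hN).mp (hw0.trans_le hw.2)
  have hlt : N / w < x + j := by
    rw [div_lt_iff₀ hw0]
    have := hw.1
    rw [div_lt_iff₀ (by linarith [hx.1])] at this
    linarith
  refine ⟨(Nat.floor_eq_iff (by positivity)).mpr ⟨?_, by linarith [hx.2]⟩, hlt⟩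
  rw [le_div_iff₀ hw0, mul_comm]
  exact (le_div_iff₀ hj).mp hw.2

lemma mem_TNstrip_iff (hN : N ≠ 0) (hx : x ∈ Icc 0 1) (hj : j ≠ 0) (hw : 0 < w) :
    w ∈ TNstrip N x j ↔ ⌊(N : ℝ) / w⌋₊ = j ∧ N / w < x + j := by
  have hj : (0 : ℝ) < j := by positivity
  refine ⟨natFloor_div_eq_of_mem_TNstrip hN hx, fun ⟨hfl, hlt⟩ => ⟨?_, ?_⟩⟩
  · rw [div_lt_iff₀ (by linarith [hx.1])]
    rw [div_lt_iff₀ hw] at hlt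
    linarith
  · have := hfl ▸ Nat.floor_le (by positivity : (0 : ℝ) ≤ N / w)
    rw [le_div_iff₀ (by positivity)]
    rw [le_div_iff₀ hw] at this
    linarith

lemma pairwise_disjoint_TNstrip (hN : N ≠ 0) (hx : x ∈ Icc 0 1) :
    Pairwise (Disjoint on TNstrip N x) := fun _ _ hij =>
  disjoint_left.mpr fun _ hi hj => hij <|
    (natFloor_div_eq_of_mem_TNstrip hN hx hi).1.symm.trans
      (natFloor_div_eq_of_mem_TNstrip hN hx hj).1

end TNstrip

section distTNbar

variable {N n : ℕ}

/-- The law of `T̄_N^n` under Lebesgue measure on `I²`, so that `F_n` is its distribution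
function. -/
noncomputable def distTNbar (N n : ℕ) : Measure (ℝ × ℝ) :=
  (volume.restrict (Icc (0 : ℝ) 1 ×ˢ Icc (0 : ℝ) 1)).map (TNbar N)^[n]

instance : IsFiniteMeasure (distTNbar N n) := by
  have : IsFiniteMeasure (volume.restrict (Icc (0 : ℝ) 1 ×ˢ Icc (0 : ℝ) 1)) :=
    isFiniteMeasure_restrict.mpr (isCompact_Icc.prod isCompact_Icc).measure_lt_top.ne
  unfold distTNbar; infer_instance

lemma distTNbar_apply {s : Set (ℝ × ℝ)} (hs : MeasurableSet s) :
    distTNbar N n s = volume ({p ∈ Icc (0 : ℝ) 1 ×ˢ Icc (0 : ℝ) 1 | (TNbar N)^[n] p ∈ s}) := by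
  rw [distTNbar, Measure.map_apply ((measurable_TNbar N).iterate n) hs,
    Measure.restrict_apply (((measurable_TNbar N).iterate n) hs), inter_comm]
  rfl

lemma Ftwo_eq_measureReal (a b : ℝ) :
    Ftwo N n a b = (distTNbar N n).real (Icc 0 a ×ˢ Icc 0 b) := by
  rw [measureReal_def, distTNbar_apply (measurableSet_Icc.prod measurableSet_Icc), Ftwo]

lemma distTNbar_succ : distTNbar N (n + 1) = (distTNbar N n).map (TNbar N) := by
  rw [distTNbar, distTNbar, Measure.map_map (measurable_TNbar N) ((measurable_TNbar N).iterate n),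
    iterate_succ']

lemma Ftwo_succ_eq_measureReal (a b : ℝ) :
    Ftwo N (n + 1) a b = (distTNbar N n).real (TNbar N ⁻¹' (Icc 0 a ×ˢ Icc 0 b)) := by
  rw [Ftwo_eq_measureReal, distTNbar_succ,
    map_measureReal_apply (measurable_TNbar N) (measurableSet_Icc.prod measurableSet_Icc)]

lemma Ftwo_sub_Ftwo_eq_measureReal_TNstrip {x c : ℝ} {j : ℕ} (hx : 0 ≤ x) (hj : j ≠ 0) :
    Ftwo N n (N / j) c - Ftwo N n (N / (x + j)) c =
      (distTNbar N n).real (TNstrip N x j ×ˢ Icc 0 c) := by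
  have hj : (0 : ℝ) < j := by positivity
  rw [TNstrip, measureReal_Ioc_prod (div_nonneg N.cast_nonneg (by linarith))
    (div_le_div_of_nonneg_left N.cast_nonneg hj (by linarith)) measurableSet_Icc,
    Ftwo_eq_measureReal, Ftwo_eq_measureReal]

lemma ae_distTNbar_iff {s : Set (ℝ × ℝ)} (hs : MeasurableSet s) :
    (∀ᵐ q ∂distTNbar N n, q ∈ s) ↔
      ∀ᵐ p, p ∈ Icc (0 : ℝ) 1 ×ˢ Icc (0 : ℝ) 1 → (TNbar N)^[n] p ∈ s := by
  rw [distTNbar, ae_map_iff (p := (· ∈ s)) ((measurable_TNbar N).iterate n).aemeasurable hs,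
    ae_restrict_iff' (measurableSet_Icc.prod measurableSet_Icc)]

lemma ae_mem_irrationalSquare : ∀ᵐ p, p ∈ Icc (0 : ℝ) 1 ×ˢ Icc (0 : ℝ) 1 → p ∈ irrationalSquare :=
  ae_irrational_fst.mono fun _ hp hp1 => ⟨hp, hp1⟩

lemma ae_distTNbar_mem_irrationalSquare (hN : N ≠ 0) :
    ∀ᵐ q ∂distTNbar N n, q ∈ irrationalSquare := by
  refine (ae_distTNbar_iff ((measurableSet_setOf_irrational.preimage measurable_fst).inter
    (measurableSet_Icc.prod measurableSet_Icc))).mpr ?_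
  exact ae_mem_irrationalSquare.mono fun p hp hp1 =>
    (mapsTo_TNbar_irrationalSquare hN).iterate n (hp hp1)

lemma ae_distTNbar_fst_notMem (hN : N ≠ 0) {C : Set ℝ} (hC : C.Countable) :
    ∀ᵐ q ∂distTNbar N n, q.1 ∉ C := by
  refine (ae_distTNbar_iff (hC.measurableSet.compl.preimage measurable_fst)).mpr ?_
  filter_upwards [ae_mem_irrationalSquare, Measure.quasiMeasurePreserving_fst.ae
    ((countable_preimage_iterate_TN hN hC n).ae_notMem volume)] with p hp hpC hp1
  rw [mem_preimage, fst_iterate_TNbar hN (hp hp1)]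
  exact hpC

lemma ae_distTNbar_snd_ne (hN : N ≠ 0) (c : ℝ) : ∀ᵐ q ∂distTNbar N n, q.2 ≠ c := by
  have hc : MeasurableSet (Prod.snd ⁻¹' {c}ᶜ : Set (ℝ × ℝ)) :=
    (measurableSet_singleton c).compl.preimage measurable_snd
  refine (ae_distTNbar_iff hc).mpr ?_
  rw [Measure.volume_eq_prod, Measure.ae_prod_iff_ae_ae]
  · filter_upwards [(countable_setOf_not_irrational.ae_notMem volume)] with u hu
    rw [not_not] at hu
    by_cases hu1 : u ∈ Icc (0 : ℝ) 1
    · have : {v | v ∈ Icc (0 : ℝ) 1 ∧ ((TNbar N)^[n] (u, v)).2 = c}.Subsingleton :=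
        fun v hv w hw => injOn_snd_iterate_TNbar hN n hu hu1 hv.1 hw.1 (hv.2.trans hw.2.symm)
      filter_upwards [this.countable.ae_notMem volume] with v hv hp
      exact fun h => hv ⟨hp.2, h⟩
    · exact ae_of_all _ fun v hp => absurd hp.1 hu1
  · exact measurableSet_setOfPred.mpr
      ((measurable_mem.mpr (measurableSet_Icc.prod measurableSet_Icc)).imp
        ((measurable_mem.mpr hc).comp ((measurable_TNbar N).iterate n)))

end distTNbar

section preimage

variable {N : ℕ} {x y w z : ℝ}

lemma TNbar_mem_box_iff (hN : N ≠ 0) (hw : Irrational w) (hw1 : w ∈ Icc 0 1) (hz : 0 ≤ z)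
    (hy : 0 < y) :
    TNbar N (w, z) ∈ Icc 0 x ×ˢ Icc 0 y ↔ TN N w ≤ x ∧ N / y ≤ ⌊(N : ℝ) / w⌋₊ + z := by
  have hi : (N : ℝ) ≤ ⌊(N : ℝ) / w⌋₊ := by
    exact_mod_cast le_natFloor_div (hw.mem_Ioc_of_mem_Icc hw1)
  have hN₀ : (0 : ℝ) < N := by positivity
  rw [TNbar_of_irrational hw, prodMk_mem_set_prod_eq, mem_Icc, mem_Icc, div_le_iff₀ (by linarith),
    div_le_iff₀ hy, mul_comm]
  simp only [(TN_mem_Icc hN hw hw1.1).1, true_and,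
    div_nonneg hN₀.le (by linarith : (0 : ℝ) ≤ ⌊(N : ℝ) / w⌋₊ + z)]

lemma TNbar_mem_box_iff_mem_TNstrips (hN : N ≠ 0) (hx : x ∈ Icc 0 1) (hy : y ∈ Ioc 0 1)
    (hwz : (w, z) ∈ irrationalSquare) (hz1 : z ≠ 1) (hzθ : z ≠ N / y - ⌊(N : ℝ) / y⌋₊)
    (hwx : TN N w ≠ x) :
    TNbar N (w, z) ∈ Icc 0 x ×ˢ Icc 0 y ↔
      (w, z) ∈ (⋃ k : ℕ, TNstrip N x (⌊(N : ℝ) / y⌋₊ + k) ×ˢ Icc 0 1) \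
        TNstrip N x ⌊(N : ℝ) / y⌋₊ ×ˢ Icc 0 ((N : ℝ) / y - ⌊(N : ℝ) / y⌋₊) := by
  obtain ⟨hw, hw1, hz⟩ : Irrational w ∧ w ∈ Icc 0 1 ∧ z ∈ Icc 0 1 := hwz
  have hw0 := (hw.mem_Ioc_of_mem_Icc hw1).1
  rw [TNbar_mem_box_iff hN hw hw1 hz.1 hy.1, Set.mem_sdiff, mem_iUnion, hwx.le_iff_lt]
  have hstrip : ∀ j, j ≠ 0 → (w ∈ TNstrip N x j ↔ ⌊(N : ℝ) / w⌋₊ = j ∧ TN N w < x) :=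
    fun j hj => (mem_TNstrip_iff hN hx hj hw0).trans (and_congr_right fun h => by
      rw [TN_eq_div_sub_natFloor hw0.le, h, sub_lt_iff_lt_add])
  set ℓ := ⌊(N : ℝ) / y⌋₊
  set i := ⌊(N : ℝ) / w⌋₊
  have hℓ : ℓ ≠ 0 := ((Nat.pos_of_ne_zero hN).trans_le (le_natFloor_div hy)).ne'
  have hstrip₀ := hstrip ℓ hℓ
  have hstrip' := fun k => hstrip (ℓ + k) (by omega)
  have hℓy : (ℓ : ℝ) ≤ N / y := Nat.floor_le (div_nonneg N.cast_nonneg hy.1.le)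
  have hyℓ : (N : ℝ) / y < ℓ + 1 := Nat.lt_floor_add_one _
  have hz1 : z < 1 := hz.2.lt_of_ne hz1
  simp only [mem_prod, hstrip', hstrip₀, hz, and_true, mem_Icc, hz.1, true_and]
  rcases lt_trichotomy i ℓ with hlt | heq | hgt
  · have : (i : ℝ) + 1 ≤ ℓ := by exact_mod_cast hlt
    constructor
    · rintro ⟨-, h'⟩; linarith
    · rintro ⟨⟨k, hk, -⟩, -⟩; omega
  · rw [heq]
    constructor
    · rintro ⟨hT, h'⟩
      exact ⟨⟨0, rfl, hT⟩, fun ⟨_, h''⟩ => hzθ (by linarith)⟩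
    · rintro ⟨⟨_, _, hT⟩, h'⟩
      refine ⟨hT, ?_⟩
      by_contra! hc
      exact h' ⟨⟨rfl, hT⟩, by linarith⟩
  · have : (ℓ : ℝ) + 1 ≤ i := by exact_mod_cast hgt
    simp only [hgt.ne', false_and, not_false_eq_true, and_true]
    exact ⟨fun h' => ⟨i - ℓ, by omega, h'.1⟩, fun ⟨_, _, h'⟩ => ⟨h', by linarith [hz.1]⟩⟩

lemma preimage_box_ae_eq_TNstrips (hN : N ≠ 0) (hx : x ∈ Icc 0 1) (hy : y ∈ Ioc 0 1) (n : ℕ) :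
    TNbar N ⁻¹' (Icc 0 x ×ˢ Icc 0 y) =ᵐ[distTNbar N n]
      ((⋃ k : ℕ, TNstrip N x (⌊(N : ℝ) / y⌋₊ + k) ×ˢ Icc 0 1) \
        TNstrip N x ⌊(N : ℝ) / y⌋₊ ×ˢ Icc 0 ((N : ℝ) / y - ⌊(N : ℝ) / y⌋₊) : Set (ℝ × ℝ)) := by
  refine eventuallyEq_set.mpr ?_
  filter_upwards [ae_distTNbar_mem_irrationalSquare hN, ae_distTNbar_snd_ne hN 1,
    ae_distTNbar_snd_ne hN ((N : ℝ) / y - ⌊(N : ℝ) / y⌋₊),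
    ae_distTNbar_fst_notMem hN (countable_preimage_TN hN (countable_singleton x))]
    with ⟨w, z⟩ hwz hz1 hzθ hwx
  exact TNbar_mem_box_iff_mem_TNstrips hN hx hy hwz hz1 hzθ hwx

end preimage

/-- Recursion for the two-dimensional distribution functions: for `n ≥ 0`, `x ∈ I`,
`0 < y ≤ 1` and `ℓ_1 = ⌊N/y⌋`,
`F_{n+1}(x,y) = Σ_{i ≥ ℓ_1}(F_n(N/i,1) − F_n(N/(x+i),1))
  − (F_n(N/ℓ_1, N/y−ℓ_1) − F_n(N/(x+ℓ_1), N/y−ℓ_1))`,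
the sum over integers `i ≥ ℓ_1` being indexed by `i = ℓ_1 + k`, `k : ℕ`. -/
theorem two_dim_recursion (N : ℕ) (hN : 1 ≤ N) (n : ℕ) (x : ℝ) (hx : x ∈ Icc (0:ℝ) 1)
    (y : ℝ) (hy : y ∈ Ioc (0:ℝ) 1) :
    Ftwo N (n+1) x y =
      (∑' k : ℕ, (Ftwo N n ((N : ℝ) / ((⌊(N : ℝ)/y⌋₊ + k : ℕ) : ℝ)) 1
                   - Ftwo N n ((N : ℝ) / (x + ((⌊(N : ℝ)/y⌋₊ + k : ℕ) : ℝ))) 1))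
      - (Ftwo N n ((N : ℝ) / (⌊(N : ℝ)/y⌋₊ : ℝ)) ((N : ℝ)/y - ⌊(N : ℝ)/y⌋₊)
          - Ftwo N n ((N : ℝ) / (x + (⌊(N : ℝ)/y⌋₊ : ℝ))) ((N : ℝ)/y - ⌊(N : ℝ)/y⌋₊)) := by
  have hN₀ : N ≠ 0 := Nat.one_le_iff_ne_zero.mp hN
  rw [Ftwo_succ_eq_measureReal, measureReal_congr (preimage_box_ae_eq_TNstrips hN₀ hx hy n)]
  set ℓ := ⌊(N : ℝ) / y⌋₊
  set θ := (N : ℝ) / y - ℓ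
  have hℓ : ℓ ≠ 0 := Nat.one_le_iff_ne_zero.mp (hN.trans (le_natFloor_div hy))
  have hθ : θ ≤ 1 := by linarith [Nat.lt_floor_add_one ((N : ℝ) / y)]
  have hmeas : ∀ j c, MeasurableSet (TNstrip N x j ×ˢ Icc (0 : ℝ) c) :=
    fun _ _ => measurableSet_TNstrip.prod measurableSet_Icc
  have hsub : TNstrip N x ℓ ×ˢ Icc 0 θ ⊆ ⋃ k : ℕ, TNstrip N x (ℓ + k) ×ˢ Icc 0 1 :=
    subset_iUnion_of_subset 0 (prod_mono subset_rfl (Icc_subset_Icc le_rfl hθ))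
  have hdisj : Pairwise (Disjoint on fun k : ℕ => TNstrip N x (ℓ + k) ×ˢ Icc (0 : ℝ) 1) :=
    fun _ _ hij => ((pairwise_disjoint_TNstrip hN₀ hx).comp_of_injective
      (add_right_injective ℓ) hij).set_prod_left _ _
  rw [measureReal_sdiff hsub (hmeas _ _), measureReal_iUnion hdisj fun _ => hmeas _ _]
  congr 1
  · exact tsum_congr fun k => (Ftwo_sub_Ftwo_eq_measureReal_TNstrip hx.1 (by omega)).symm
  · exact (Ftwo_sub_Ftwo_eq_measureReal_TNstrip hx.1 hℓ).symm
end
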